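/- Let B be a small category, G = Set^B, and I a finite directed multigraph without directed cycles and with no branching vertices (Br(I) = ∅). Then for every diagram D : I → G the colimiting cocone κ : D ⇒ ΔS is a Van Kampen cocone. -/

import Mathlib

open CategoryTheory CategoryTheory.Limits

universe u

/-- A directed multigraph. -/
structure MGraph : Type (u + 1) where
  V : Type u
  E : Type u
  s : E → V
  t : E → V

/-- A diagram of shape a directed multigraph `I` in a category `C`
(a graph morphism into the underlying graph of `C`). -/
structure GDiagram (I : MGraph.{u}) (C : Type*) [Category C] where
  obj : I.V → C
  map : (e : I.E) → obj (I.s e) ⟶ obj (I.t e)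

section Core

variable {I : MGraph.{u}} {C : Type*} [Category C]

/-- A natural transformation between diagrams of shape `I`. -/
@[ext]
structure GHom (F G : GDiagram I C) where
  app : (i : I.V) → F.obj i ⟶ G.obj i
  naturality : ∀ e : I.E, F.map e ≫ app (I.t e) = app (I.s e) ≫ G.map e

/-- A transformation is cartesian if all its naturality squares are pullbacks. -/
def GHom.Cartesian {F G : GDiagram I C} (τ : GHom F G) : Prop :=
  ∀ e : I.E, IsPullback (F.map e) (τ.app (I.s e)) (τ.app (I.t e)) (G.map e)

/-- An object of the category `C^I ⇓ D` of cartesian transformations into `D`. -/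
structure CartObj (D : GDiagram I C) where
  diag : GDiagram I C
  hom : GHom diag D
  cart : hom.Cartesian

instance cartObjCategory (D : GDiagram I C) : Category (CartObj D) where
  Hom A B := { φ : GHom A.diag B.diag // ∀ i, φ.app i ≫ B.hom.app i = A.hom.app i }
  id A := ⟨⟨fun _ => 𝟙 _, fun e => by simp⟩, fun i => by simp⟩
  comp {A B C'} φ ψ :=
    ⟨⟨fun i => φ.1.app i ≫ ψ.1.app i, fun e => by
        rw [← Category.assoc, φ.1.naturality, Category.assoc, ψ.1.naturality, ← Category.assoc]⟩,
      fun i => by rw [Category.assoc, ψ.2 i, φ.2 i]⟩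
  id_comp f := Subtype.ext (GHom.ext (funext fun i => Category.id_comp _))
  comp_id f := Subtype.ext (GHom.ext (funext fun i => Category.comp_id _))
  assoc f g h := Subtype.ext (GHom.ext (funext fun i => Category.assoc _ _ _))

/-- A commutative cocone under a diagram of shape `I`. -/
structure GCocone (D : GDiagram I C) where
  pt : C
  leg : (i : I.V) → D.obj i ⟶ pt
  comm : ∀ e : I.E, D.map e ≫ leg (I.t e) = leg (I.s e)

/-- A cocone is colimiting if every cocone factors uniquely through it. -/
def GCocone.IsColimit {D : GDiagram I C} (c : GCocone D) : Prop :=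
  ∀ c' : GCocone D, ∃! f : c.pt ⟶ c'.pt, ∀ i, c.leg i ≫ f = c'.leg i

/-- The Van Kampen property of a cocone `c`: the functor `κ*`, given by pulling back
objects of the slice category over the apex along all the cocone legs, is an
equivalence between the slice category and the category of cartesian natural
transformations into `D`.  (We phrase this as: there is an equivalence `F` which is,
objectwise and morphismwise, given by pullback along the legs.) -/
def GCocone.IsVanKampen {D : GDiagram I C} (c : GCocone D) : Prop :=
  ∃ (F : Over c.pt ⥤ CartObj D)
    (π : (σ : Over c.pt) → (i : I.V) → ((F.obj σ).diag.obj i ⟶ σ.left)),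
    (∀ (σ : Over c.pt) (i : I.V),
        IsPullback (π σ i) ((F.obj σ).hom.app i) σ.hom (c.leg i)) ∧
    (∀ {σ σ' : Over c.pt} (γ : σ ⟶ σ') (i : I.V),
        ((F.map γ).1.app i) ≫ π σ' i = π σ i ≫ γ.left) ∧
    F.IsEquivalence

end Core
section Paths

variable {B : Type u} [SmallCategory B] {I : MGraph.{u}}

/-- An element of some component of the diagram `D`, at sort `X`
(the components are regarded as disjoint, so each element is tagged with its index). -/
def Elt (D : GDiagram I (B ⥤ Type u)) (X : B) : Type u :=
  Σ i : I.V, (D.obj i).obj X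

/-- A path segment of sort `X` in the diagram `D`: a triple `(y, δ, y')` with
`δ` an edge (`fwd`) or a formally reversed edge (`bwd`) of the shape graph. -/
inductive Seg (D : GDiagram I (B ⥤ Type u)) (X : B) : Type u
  | fwd (d : I.E) (y : (D.obj (I.s d)).obj X)
  | bwd (d : I.E) (y : (D.obj (I.s d)).obj X)

namespace Seg

variable {D : GDiagram I (B ⥤ Type u)} {X : B}

/-- The first component of a path segment. -/
def src : Seg D X → Elt D X
  | fwd d y => ⟨I.s d, y⟩
  | bwd d y => ⟨I.t d, (D.map d).app X y⟩

/-- The third component of a path segment. -/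
def tgt : Seg D X → Elt D X
  | fwd d y => ⟨I.t d, (D.map d).app X y⟩
  | bwd d y => ⟨I.s d, y⟩

/-- The reversed segment: `(y, δ, y') ↦ (y', δᵒᵖ, y)`. -/
def rev : Seg D X → Seg D X
  | fwd d y => bwd d y
  | bwd d y => fwd d y

/-- Two segments are weakly equal if they are equal or each is the reverse of the other. -/
def WeaklyEq (a b : Seg D X) : Prop := a = b ∨ a = b.rev

end Seg

variable {D : GDiagram I (B ⥤ Type u)} {X : B}

/-- `p` is a mapping path of sort `X` connecting `z` with `z'`:  a finite sequence of
path segments in which consecutive segments share endpoints, starting at `z` and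
ending at `z'`; the empty path connects each element with itself. -/
def IsMPath (p : List (Seg D X)) (z z' : Elt D X) : Prop :=
  p.Chain' (fun a b => a.tgt = b.src) ∧
  (p = [] → z = z') ∧
  ∀ h : p ≠ [], (p.head h).src = z ∧ (p.getLast h).tgt = z'

/-- A mapping path is proper if no two distinct segments of it are weakly equal. -/
def ProperPath (p : List (Seg D X)) : Prop :=
  p.Pairwise (fun a b => ¬ Seg.WeaklyEq a b)

/-- Two mapping paths are disjoint if no segment of one is weakly equal to a segment
of the other. -/
def DisjointPaths (p q : List (Seg D X)) : Prop :=
  ∀ a ∈ p, ∀ b ∈ q, ¬ Seg.WeaklyEq a b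

/-- A mapping path `p` starting at `z` is inner-cycle free if `yᵢ ≠ yⱼ` for all
`0 ≤ i < j ≤ n` with `j - i ≤ n - 1`, where `y₀ = z, y₁, …, yₙ` is the sequence of
elements visited by the path. -/
def InnerCycleFree (p : List (Seg D X)) (z : Elt D X) : Prop :=
  ∀ (i j : ℕ), (_ : i < j) → (_ : j ≤ p.length) → j - i ≤ p.length - 1 →
    (z :: p.map Seg.tgt).get ⟨i, by simp only [List.length_cons, List.length_map]; omega⟩ ≠
    (z :: p.map Seg.tgt).get ⟨j, by simp only [List.length_cons, List.length_map]; omega⟩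

end Paths
section GraphNotions

/-- The cyclic successor of `j : Fin n`. -/
def fcsucc {n : ℕ} (hn : 0 < n) (j : Fin n) : Fin n := ⟨(j.1 + 1) % n, Nat.mod_lt _ hn⟩

/-- `IsEdgeSeq I l i j` : `l` is a sequence of edges of `I` leading from `i` to `j`. -/
def IsEdgeSeq (I : MGraph.{u}) : List I.E → I.V → I.V → Prop
  | [], i, j => i = j
  | e :: l, i, j => I.s e = i ∧ IsEdgeSeq I l (I.t e) j

/-- A vertex is minimal if it has no outgoing edges. -/
def MGraph.Minimal (I : MGraph.{u}) (i : I.V) : Prop := ∀ e : I.E, I.s e ≠ i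

/-- A vertex is branching if it has at least two outgoing edges. -/
def MGraph.Branching (I : MGraph.{u}) (i : I.V) : Prop :=
  ∃ e e' : I.E, e ≠ e' ∧ I.s e = i ∧ I.s e' = i

/-- A branch is a nonempty edge sequence from a branching vertex to a minimal vertex. -/
def IsBranch (I : MGraph.{u}) (p : List I.E) (i j : I.V) : Prop :=
  I.Branching i ∧ I.Minimal j ∧ p ≠ [] ∧ IsEdgeSeq I p i j

/-- A minimal vertex is affected if it is the target of some branch. -/
def MGraph.Affected (I : MGraph.{u}) (j : I.V) : Prop := ∃ p i, IsBranch I p i j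

/-- A directed cycle: pairwise distinct edges `d₀, …, d_{n-1}` (`n ≥ 1`) with
`t(d_{k-1}) = s(d_{k mod n})`. -/
def MGraph.HasDirectedCycle (I : MGraph.{u}) : Prop :=
  ∃ (n : ℕ) (hn : 1 ≤ n) (d : Fin n → I.E), Function.Injective d ∧
    ∀ k : Fin n, I.t (d k) = I.s (d (fcsucc (by omega) k))

/-- The set of endpoints of an edge. -/
def MGraph.ends (I : MGraph.{u}) (e : I.E) : Set I.V := {I.s e, I.t e}

/-- An undirected cycle: pairwise distinct edges `d₀, …, d_{n-1}` (`n ≥ 2`) such that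
cyclically consecutive edges share an endpoint. -/
def IsUndirectedCycle (I : MGraph.{u}) {n : ℕ} (hn : 2 ≤ n) (d : Fin n → I.E) : Prop :=
  Function.Injective d ∧
    ∀ k : Fin n, (I.ends (d k) ∩ I.ends (d (fcsucc (by omega) k))).Nonempty

variable {B : Type u} [SmallCategory B] {I : MGraph.{u}}

/-- `Evals D X l z w` : applying, at sort `X`, the composite of the maps `D_d` along
the edge sequence `l` to the element `z` yields the element `w`. -/
inductive Evals (D : GDiagram I (B ⥤ Type u)) (X : B) :
    List I.E → Elt D X → Elt D X → Prop
  | nil (z : Elt D X) : Evals D X [] z z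
  | cons (e : I.E) (y : (D.obj (I.s e)).obj X) {l : List I.E} {w : Elt D X} :
      Evals D X l ⟨I.t e, (D.map e).app X y⟩ w → Evals D X (e :: l) ⟨I.s e, y⟩ w

/-- `D` is image-disjoint: for each pair of different branches `p, p'` starting at the
same branching vertex `i` and every `y ∈ D_i(X)`, we have `D_p(y) ≠ D_{p'}(y)`. -/
def ImageDisjoint (D : GDiagram I (B ⥤ Type u)) : Prop :=
  ∀ (i j j' : I.V) (p p' : List I.E), IsBranch I p i j → IsBranch I p' i j' → p ≠ p' →
    ∀ (X : B) (y : (D.obj i).obj X) (w w' : Elt D X),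
      Evals D X p ⟨i, y⟩ w → Evals D X p' ⟨i, y⟩ w' → w ≠ w'

end GraphNotions

/-!
The functor `κ*` is assembled from pullbacks along the legs. Colimits in `Set^B` are computed
objectwise as the disjoint union of the `D i` modulo the zigzags generated by the maps of `D`,
and they are stable under pullback; this alone makes `κ*` fully faithful.

For essential surjectivity, a cartesian `A ⇒ D` is compared with `κ*` of `colim A → S`. Without
branching every element has at most one successor, so two elements are identified in a colimit
exactly when they have a common descendant. Paths in `D` lift forwards to `A` by naturality and
backwards by cartesianness, and the absence of directed cycles makes the backward lifts unique.
Hence the comparison is bijective at every vertex and every sort.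
-/

open Relation

theorem List.exists_eq_append_cons_append_cons_of_not_nodup {α : Type*} {l : List α}
    (h : ¬ l.Nodup) : ∃ a l₁ l₂ l₃, l = l₁ ++ a :: (l₂ ++ a :: l₃) := by
  induction l with
  | nil => exact absurd List.nodup_nil h
  | cons b l ih =>
    rw [List.nodup_cons, not_and_or, not_not] at h
    rcases h with hb | hl
    · obtain ⟨l₂, l₃, rfl⟩ := List.append_of_mem hb
      exact ⟨b, [], l₂, l₃, rfl⟩
    · obtain ⟨a, l₁, l₂, l₃, rfl⟩ := ih hl
      exact ⟨a, b :: l₁, l₂, l₃, rfl⟩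

section Walks

variable {I : MGraph.{u}}

def MGraph.Adj (I : MGraph.{u}) (i j : I.V) : Prop := ∃ e : I.E, I.s e = i ∧ I.t e = j

theorem isEdgeSeq_append {l₁ l₂ : List I.E} {i k : I.V} :
    IsEdgeSeq I (l₁ ++ l₂) i k ↔ ∃ j, IsEdgeSeq I l₁ i j ∧ IsEdgeSeq I l₂ j k := by
  induction l₁ generalizing i with
  | nil => simp [IsEdgeSeq]
  | cons a l₁ ih => simp [IsEdgeSeq, ih, and_assoc]

theorem IsEdgeSeq.t_getElem {l : List I.E} {i j : I.V} (h : IsEdgeSeq I l i j) {k : ℕ}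
    (hk : k < l.length) :
    I.t l[k] = if hk' : k + 1 < l.length then I.s l[k + 1] else j := by
  induction l generalizing i k with
  | nil => exact absurd hk (Nat.not_lt_zero k)
  | cons a l ih =>
    cases k with
    | zero =>
      cases l with
      | nil => simpa [IsEdgeSeq] using h.2
      | cons b l => simpa using h.2.1.symm
    | succ k => simpa using ih h.2 (Nat.lt_of_succ_lt_succ hk)

theorem IsEdgeSeq.hasDirectedCycle_of_nodup {l : List I.E} {i : I.V} (h : IsEdgeSeq I l i i)
    (hne : l ≠ []) (hnd : l.Nodup) : I.HasDirectedCycle := by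
  have hn : 0 < l.length := List.length_pos_iff.2 hne
  refine ⟨l.length, hn, l.get, hnd.injective_get, fun k => ?_⟩
  simp only [List.get_eq_getElem, h.t_getElem k.2, fcsucc]
  split_ifs with hk
  · simp [Nat.mod_eq_of_lt hk]
  · obtain ⟨a, l', rfl⟩ := List.exists_cons_of_ne_nil hne
    simp [show k.1 + 1 = (a :: l').length by omega, h.1]

theorem IsEdgeSeq.hasDirectedCycle {l : List I.E} {i : I.V} (h : IsEdgeSeq I l i i)
    (hne : l ≠ []) : I.HasDirectedCycle := by
  induction hn : l.length using Nat.strong_induction_on generalizing l i with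
  | _ n ih =>
    by_cases hnd : l.Nodup
    · exact h.hasDirectedCycle_of_nodup hne hnd
    obtain ⟨a, l₁, l₂, l₃, rfl⟩ := List.exists_eq_append_cons_append_cons_of_not_nodup hnd
    obtain ⟨j, -, ha, h₂₃⟩ := isEdgeSeq_append.1 h
    obtain ⟨j', h₂, ha', -⟩ := isEdgeSeq_append.1 h₂₃
    subst ha ha'
    exact ih (l₂.length + 1) (by simp [← hn]; omega) (l := a :: l₂) ⟨rfl, h₂⟩
      (List.cons_ne_nil _ _) rfl

theorem exists_isEdgeSeq_of_transGen {i j : I.V} (h : TransGen I.Adj i j) :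
    ∃ l ≠ [], IsEdgeSeq I l i j := by
  induction h using TransGen.head_induction_on with
  | single h => obtain ⟨e, rfl, rfl⟩ := h; exact ⟨[e], List.cons_ne_nil _ _, rfl, rfl⟩
  | head h _ ih =>
    obtain ⟨e, rfl, rfl⟩ := h
    obtain ⟨l, -, hl⟩ := ih
    exact ⟨e :: l, List.cons_ne_nil _ _, rfl, hl⟩

theorem MGraph.not_transGen_adj_self (hnc : ¬ I.HasDirectedCycle) (i : I.V) :
    ¬ TransGen I.Adj i i := fun h =>
  let ⟨_, hne, hl⟩ := exists_isEdgeSeq_of_transGen h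
  hnc (hl.hasDirectedCycle hne)

theorem MGraph.eq_of_s_eq (hnb : ∀ i : I.V, ¬ I.Branching i) {e e' : I.E}
    (h : I.s e = I.s e') : e = e' :=
  by_contra fun hne => hnb (I.s e) ⟨e, e', hne, rfl, h.symm⟩

end Walks

namespace GCocone

variable {I : MGraph.{u}} {C : Type*} [Category C] {D : GDiagram I C} {c : GCocone D}

theorem IsColimit.hom_ext (hc : c.IsColimit) {Y : C} {f g : c.pt ⟶ Y}
    (h : ∀ i, c.leg i ≫ f = c.leg i ≫ g) : f = g :=
  (hc ⟨Y, fun i => c.leg i ≫ g, fun e => by rw [← Category.assoc, c.comm]⟩).unique h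
    fun _ => rfl

variable [HasPullbacks C] (c)

noncomputable section

def pullbackDiagMap (σ : Over c.pt) (e : I.E) :
    pullback σ.hom (c.leg (I.s e)) ⟶ pullback σ.hom (c.leg (I.t e)) :=
  pullback.lift (pullback.fst _ _) (pullback.snd _ _ ≫ D.map e)
    (by rw [Category.assoc, c.comm e, pullback.condition])

@[simp]
theorem pullbackDiagMap_fst (σ : Over c.pt) (e : I.E) :
    c.pullbackDiagMap σ e ≫ pullback.fst σ.hom (c.leg (I.t e)) =
      pullback.fst σ.hom (c.leg (I.s e)) :=
  pullback.lift_fst _ _ _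

@[simp]
theorem pullbackDiagMap_snd (σ : Over c.pt) (e : I.E) :
    c.pullbackDiagMap σ e ≫ pullback.snd σ.hom (c.leg (I.t e)) =
      pullback.snd σ.hom (c.leg (I.s e)) ≫ D.map e :=
  pullback.lift_snd _ _ _

abbrev pullbackObj (σ : Over c.pt) : CartObj D where
  diag := ⟨fun i => pullback σ.hom (c.leg i), c.pullbackDiagMap σ⟩
  hom := ⟨fun i => pullback.snd _ _, c.pullbackDiagMap_snd σ⟩
  cart e := by
    refine IsPullback.of_right ?_ (c.pullbackDiagMap_snd σ e)
      (IsPullback.of_hasPullback σ.hom (c.leg (I.t e)))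
    rw [pullbackDiagMap_fst, c.comm e]
    exact IsPullback.of_hasPullback σ.hom (c.leg (I.s e))

def pullbackMapApp {σ σ' : Over c.pt} (γ : σ ⟶ σ') (i : I.V) :
    pullback σ.hom (c.leg i) ⟶ pullback σ'.hom (c.leg i) :=
  pullback.lift (pullback.fst _ _ ≫ γ.left) (pullback.snd _ _)
    (by rw [Category.assoc, Over.w γ, pullback.condition])

@[simp]
theorem pullbackMapApp_fst {σ σ' : Over c.pt} (γ : σ ⟶ σ') (i : I.V) :
    c.pullbackMapApp γ i ≫ pullback.fst σ'.hom (c.leg i) = pullback.fst σ.hom (c.leg i) ≫ γ.left :=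
  pullback.lift_fst _ _ _

@[simp]
theorem pullbackMapApp_snd {σ σ' : Over c.pt} (γ : σ ⟶ σ') (i : I.V) :
    c.pullbackMapApp γ i ≫ pullback.snd σ'.hom (c.leg i) = pullback.snd σ.hom (c.leg i) :=
  pullback.lift_snd _ _ _

/-- The functor `κ*`. -/
def pullbackFunctor : Over c.pt ⥤ CartObj D where
  obj := c.pullbackObj
  map {σ σ'} γ :=
    ⟨{ app := c.pullbackMapApp γ
       naturality := fun e => by
         show c.pullbackDiagMap σ e ≫ c.pullbackMapApp γ (I.t e) =
           c.pullbackMapApp γ (I.s e) ≫ c.pullbackDiagMap σ' e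
         apply pullback.hom_ext
         · simp [reassoc_of% c.pullbackDiagMap_fst σ e]
         · simp [reassoc_of% c.pullbackMapApp_snd γ (I.s e)] },
     c.pullbackMapApp_snd γ⟩
  map_id σ := Subtype.ext <| GHom.ext <| funext fun i => by
    show c.pullbackMapApp (𝟙 σ) i = 𝟙 _
    apply pullback.hom_ext <;> simp
  map_comp γ δ := Subtype.ext <| GHom.ext <| funext fun i => by
    show c.pullbackMapApp (γ ≫ δ) i = c.pullbackMapApp γ i ≫ c.pullbackMapApp δ i
    apply pullback.hom_ext <;> simp [reassoc_of% c.pullbackMapApp_fst γ i]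

abbrev pullbackCocone (σ : Over c.pt) : GCocone (c.pullbackObj σ).diag where
  pt := σ.left
  leg i := pullback.fst σ.hom (c.leg i)
  comm := c.pullbackDiagMap_fst σ

end

variable {c}

theorem pullbackFunctor_faithful (h : ∀ σ, (c.pullbackCocone σ).IsColimit) :
    c.pullbackFunctor.Faithful where
  map_injective {σ σ'} γ γ' hγ := Over.OverMorphism.ext <| (h σ).hom_ext fun i => by
    have hi : c.pullbackMapApp γ i = c.pullbackMapApp γ' i := congrArg (fun φ => φ.1.app i) hγ
    simpa using congrArg (· ≫ pullback.fst σ'.hom (c.leg i)) hi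

theorem exists_pullbackMapApp_eq {σ σ' : Over c.pt} (h : (c.pullbackCocone σ).IsColimit)
    (ψ : ∀ i, pullback σ.hom (c.leg i) ⟶ pullback σ'.hom (c.leg i))
    (hnat : ∀ e, c.pullbackDiagMap σ e ≫ ψ (I.t e) = ψ (I.s e) ≫ c.pullbackDiagMap σ' e)
    (hsnd : ∀ i, ψ i ≫ pullback.snd σ'.hom (c.leg i) = pullback.snd σ.hom (c.leg i)) :
    ∃ γ : σ ⟶ σ', ∀ i, c.pullbackMapApp γ i = ψ i := by
  obtain ⟨γ, hγ, -⟩ := h ⟨σ'.left, fun i => ψ i ≫ pullback.fst _ _, fun e => by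
    show c.pullbackDiagMap σ e ≫ ψ (I.t e) ≫ _ = _
    rw [reassoc_of% hnat e, pullbackDiagMap_fst]⟩
  have hfst (i : I.V) : pullback.fst σ.hom (c.leg i) ≫ γ = ψ i ≫ pullback.fst _ _ := hγ i
  have hover : γ ≫ σ'.hom = σ.hom := h.hom_ext fun i => by
    show pullback.fst σ.hom (c.leg i) ≫ γ ≫ σ'.hom = pullback.fst σ.hom (c.leg i) ≫ σ.hom
    rw [reassoc_of% hfst i, pullback.condition, reassoc_of% hsnd i, pullback.condition]
  refine ⟨Over.homMk γ hover, fun i => pullback.hom_ext ?_ ?_⟩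
  · exact (c.pullbackMapApp_fst _ i).trans (hfst i)
  · rw [pullbackMapApp_snd, hsnd]

theorem pullbackFunctor_full (h : ∀ σ, (c.pullbackCocone σ).IsColimit) :
    c.pullbackFunctor.Full where
  map_surjective {σ σ'} ψ := by
    obtain ⟨γ, hγ⟩ := c.exists_pullbackMapApp_eq (h σ) ψ.1.app ψ.1.naturality ψ.2
    exact ⟨γ, Subtype.ext <| GHom.ext <| funext hγ⟩

end GCocone

theorem CartObj.isIso_of_isIso_app {I : MGraph.{u}} {C : Type*} [Category C] {D : GDiagram I C}
    {A A' : CartObj D} (φ : A ⟶ A') [∀ i, IsIso (φ.1.app i)] : IsIso φ := by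
  refine ⟨⟨⟨⟨fun i => inv (φ.1.app i), fun e => ?_⟩, fun i => ?_⟩, ?_, ?_⟩⟩
  · rw [IsIso.comp_inv_eq, Category.assoc, φ.1.naturality e, IsIso.inv_hom_id_assoc]
  · rw [← φ.2 i, IsIso.inv_hom_id_assoc]
  · exact Subtype.ext <| GHom.ext <| funext fun i => IsIso.hom_inv_id (φ.1.app i)
  · exact Subtype.ext <| GHom.ext <| funext fun i => IsIso.inv_hom_id (φ.1.app i)

section Presheaf

variable {B : Type u} [SmallCategory B] {I : MGraph.{u}}

theorem pullback_condition_app {F G H : B ⥤ Type u} (f : F ⟶ H) (g : G ⟶ H) {X : B}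
    (p : (pullback f g).obj X) :
    f.app X ((pullback.fst f g).app X p) = g.app X ((pullback.snd f g).app X p) :=
  types_congr_hom ((IsPullback.of_hasPullback f g).app X).w p

theorem pullback_ext_app {F G H : B ⥤ Type u} {f : F ⟶ H} {g : G ⟶ H} {X : B}
    {p p' : (pullback f g).obj X}
    (h₁ : (pullback.fst f g).app X p = (pullback.fst f g).app X p')
    (h₂ : (pullback.snd f g).app X p = (pullback.snd f g).app X p') : p = p' :=
  Types.ext_of_isPullback ((IsPullback.of_hasPullback f g).app X) h₁ h₂

theorem exists_pullback_app {F G H : B ⥤ Type u} (f : F ⟶ H) (g : G ⟶ H) {X : B}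
    (x : F.obj X) (y : G.obj X) (h : f.app X x = g.app X y) :
    ∃ p : (pullback f g).obj X, (pullback.fst f g).app X p = x ∧ (pullback.snd f g).app X p = y :=
  Types.exists_of_isPullback ((IsPullback.of_hasPullback f g).app X) x y h

namespace GDiagram

variable (D : GDiagram I (B ⥤ Type u))

def Step (X : B) (z z' : Elt D X) : Prop :=
  ∃ (e : I.E) (y : (D.obj (I.s e)).obj X), z = ⟨I.s e, y⟩ ∧ z' = ⟨I.t e, (D.map e).app X y⟩

def eltMap {X Y : B} (f : X ⟶ Y) (z : Elt D X) : Elt D Y :=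
  ⟨z.1, (D.obj z.1).map f z.2⟩

variable {D}

theorem Step.eltMap {X Y : B} (f : X ⟶ Y) {z z' : Elt D X} (h : D.Step X z z') :
    D.Step Y (D.eltMap f z) (D.eltMap f z') := by
  obtain ⟨e, y, rfl, rfl⟩ := h
  exact ⟨e, (D.obj (I.s e)).map f y, rfl,
    congrArg (Sigma.mk (I.t e)) (NatTrans.naturality_apply (D.map e) f y).symm⟩

theorem Step.adj {X : B} {z z' : Elt D X} (h : D.Step X z z') : I.Adj z.1 z'.1 := by
  obtain ⟨e, y, rfl, rfl⟩ := h
  exact ⟨e, rfl, rfl⟩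

variable (D)

def colimit : B ⥤ Type u where
  obj X := Quot (D.Step X)
  map f := ↾Quot.map (D.eltMap f) fun _ _ => Step.eltMap f
  map_id X := by
    ext q
    induction q using Quot.ind with
    | mk z => exact congrArg (Quot.mk _) (by cases z; simp [eltMap]; rfl)
  map_comp f g := by
    ext q
    induction q using Quot.ind with
    | mk z => exact congrArg (Quot.mk _) (by simp [eltMap]; rfl)

def colimitLeg (i : I.V) : D.obj i ⟶ D.colimit where
  app X := ↾fun x => Quot.mk _ ⟨i, x⟩

theorem colimitLeg_comm (e : I.E) : D.map e ≫ D.colimitLeg (I.t e) = D.colimitLeg (I.s e) := by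
  ext X y
  exact (Quot.sound ⟨e, y, rfl, rfl⟩).symm

theorem colimit_hom_ext {F : B ⥤ Type u} {f g : D.colimit ⟶ F}
    (h : ∀ i, D.colimitLeg i ≫ f = D.colimitLeg i ≫ g) : f = g := by
  ext X q
  induction q using Quot.ind with
  | mk z => exact types_congr_hom (congr_app (h z.1) X) z.2

end GDiagram

namespace GCocone

variable {D : GDiagram I (B ⥤ Type u)} (c : GCocone D)

theorem leg_app_eq_of_step {X : B} {z z' : Elt D X} (h : D.Step X z z') :
    (c.leg z.1).app X z.2 = (c.leg z'.1).app X z'.2 := by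
  obtain ⟨e, y, rfl, rfl⟩ := h
  exact (types_congr_hom (congr_app (c.comm e) X) y).symm

def desc : D.colimit ⟶ c.pt where
  app X := ↾Quot.lift (fun z => (c.leg z.1).app X z.2) fun _ _ => c.leg_app_eq_of_step
  naturality X Y f := by
    ext q
    induction q using Quot.ind with
    | mk z => exact NatTrans.naturality_apply (c.leg z.1) f z.2

@[simp]
theorem colimitLeg_desc (i : I.V) : D.colimitLeg i ≫ c.desc = c.leg i :=
  rfl

theorem leg_app_eq_of_eqvGen {X : B} {z z' : Elt D X} (h : EqvGen (D.Step X) z z') :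
    (c.leg z.1).app X z.2 = (c.leg z'.1).app X z'.2 :=
  congrArg (c.desc.app X) (Quot.eqvGen_sound h)

theorem isColimit_iff_isIso_desc : c.IsColimit ↔ IsIso c.desc := by
  constructor
  · intro hc
    obtain ⟨f, hf, -⟩ := hc ⟨D.colimit, D.colimitLeg, D.colimitLeg_comm⟩
    refine ⟨f, D.colimit_hom_ext fun i => ?_, hc.hom_ext fun i => ?_⟩
    · rw [reassoc_of% c.colimitLeg_desc i, hf, Category.comp_id]
    · rw [reassoc_of% hf i, colimitLeg_desc, Category.comp_id]
  · intro _ c'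
    refine ⟨inv c.desc ≫ c'.desc, fun i => ?_, fun g hg => ?_⟩
    · rw [← colimitLeg_desc, Category.assoc, IsIso.hom_inv_id_assoc, colimitLeg_desc]
    · rw [IsIso.eq_inv_comp]
      exact D.colimit_hom_ext fun i => by rw [reassoc_of% c.colimitLeg_desc i, hg, colimitLeg_desc]

theorem isColimit_iff_bijective_desc_app :
    c.IsColimit ↔ ∀ X, Function.Bijective (c.desc.app X) := by
  rw [isColimit_iff_isIso_desc]
  refine ⟨fun _ X => (isIso_iff_bijective _).1 inferInstance, fun h => ?_⟩
  have := fun X => (isIso_iff_bijective (c.desc.app X)).2 (h X)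
  exact NatIso.isIso_of_isIso_app _

variable {c}

theorem IsColimit.eqvGen_of_leg_app_eq (hc : c.IsColimit) {X : B} {z z' : Elt D X}
    (h : (c.leg z.1).app X z.2 = (c.leg z'.1).app X z'.2) : EqvGen (D.Step X) z z' :=
  Quot.eqvGen_exact ((c.isColimit_iff_bijective_desc_app.1 hc X).1 h)

theorem IsColimit.exists_leg_app_eq (hc : c.IsColimit) {X : B} (s : c.pt.obj X) :
    ∃ z : Elt D X, (c.leg z.1).app X z.2 = s := by
  obtain ⟨q, rfl⟩ := (c.isColimit_iff_bijective_desc_app.1 hc X).2 s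
  obtain ⟨z, rfl⟩ := Quot.exists_rep q
  exact ⟨z, rfl⟩

/-- Over a fixed element of `σ`, a zigzag in `D` lifts to a zigzag in `κ*(σ)`. -/
theorem eqvGen_step_pullbackObj (σ : Over c.pt) {X : B} {z z' : Elt D X}
    (h : EqvGen (D.Step X) z z') (p : (pullback σ.hom (c.leg z.1)).obj X)
    (p' : (pullback σ.hom (c.leg z'.1)).obj X)
    (hfst : (pullback.fst σ.hom (c.leg z.1)).app X p = (pullback.fst σ.hom (c.leg z'.1)).app X p')
    (hp : (pullback.snd σ.hom (c.leg z.1)).app X p = z.2)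
    (hp' : (pullback.snd σ.hom (c.leg z'.1)).app X p' = z'.2) :
    EqvGen ((c.pullbackObj σ).diag.Step X) ⟨z.1, p⟩ ⟨z'.1, p'⟩ := by
  induction h with
  | rel _ _ hstep =>
    obtain ⟨e, y, rfl, rfl⟩ := hstep
    refine EqvGen.rel _ _ ⟨e, p, rfl, congrArg (Sigma.mk _) ?_⟩
    refine pullback_ext_app ?_ ?_
    · exact hfst.symm.trans (types_congr_hom (congr_app (c.pullbackDiagMap_fst σ e) X) p).symm
    · refine hp'.trans ((types_congr_hom (congr_app (c.pullbackDiagMap_snd σ e) X) p).trans ?_).symm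
      exact congrArg _ hp
  | refl =>
    obtain rfl := pullback_ext_app hfst (hp.trans hp'.symm)
    exact EqvGen.refl _
  | symm _ _ _ ih => exact (ih p' p hfst.symm hp' hp).symm
  | trans a b _ hab _ ih₁ ih₂ =>
    have hb : σ.hom.app X ((pullback.fst σ.hom (c.leg a.1)).app X p) = (c.leg b.1).app X b.2 := by
      rw [pullback_condition_app, hp, c.leg_app_eq_of_eqvGen hab]
    obtain ⟨q, hq, hq'⟩ := exists_pullback_app _ _ _ _ hb
    exact (ih₁ p q hq.symm hp hq').trans _ _ _ (ih₂ q p' (hq.trans hfst) hq' hp')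

/-- Colimits in `Set^B` are universal. -/
theorem IsColimit.isColimit_pullbackCocone (hc : c.IsColimit) (σ : Over c.pt) :
    (c.pullbackCocone σ).IsColimit := by
  refine (isColimit_iff_bijective_desc_app _).2 fun X => ⟨fun q q' h => ?_, fun t => ?_⟩
  · obtain ⟨⟨i, p⟩, rfl⟩ := Quot.exists_rep q
    obtain ⟨⟨j, p'⟩, rfl⟩ := Quot.exists_rep q'
    have hfst : (pullback.fst σ.hom (c.leg i)).app X p = (pullback.fst σ.hom (c.leg j)).app X p' := h
    have hleg : (c.leg i).app X ((pullback.snd σ.hom (c.leg i)).app X p) =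
        (c.leg j).app X ((pullback.snd σ.hom (c.leg j)).app X p') := by
      rw [← pullback_condition_app, ← pullback_condition_app, hfst]
    exact Quot.eqvGen_sound
      (eqvGen_step_pullbackObj σ (z := ⟨i, _⟩) (z' := ⟨j, _⟩) (hc.eqvGen_of_leg_app_eq hleg)
        p p' hfst rfl rfl)
  · obtain ⟨z, hz⟩ := hc.exists_leg_app_eq (σ.hom.app X t)
    obtain ⟨p, hp, -⟩ := exists_pullback_app σ.hom (c.leg z.1) t z.2 hz.symm
    exact ⟨Quot.mk _ ⟨z.1, p⟩, hp⟩

end GCocone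

end Presheaf

section NoBranching

variable {B : Type u} [SmallCategory B] {I : MGraph.{u}}

namespace GDiagram

variable {D : GDiagram I (B ⥤ Type u)} {X : B}

theorem Step.eq_of_step (hnb : ∀ i : I.V, ¬ I.Branching i) {z z₁ z₂ : Elt D X}
    (h₁ : D.Step X z z₁) (h₂ : D.Step X z z₂) : z₁ = z₂ := by
  obtain ⟨e, y, rfl, rfl⟩ := h₁
  obtain ⟨e', y', h, rfl⟩ := h₂
  obtain rfl : e = e' := I.eq_of_s_eq hnb (congrArg Sigma.fst h)
  obtain rfl : y = y' := eq_of_heq (Sigma.mk.inj_iff.1 h).2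
  rfl

/-- Without branching every element has at most one successor, so zigzags can be straightened
into two paths with a common end. -/
theorem join_of_eqvGen (hnb : ∀ i : I.V, ¬ I.Branching i) {z z' : Elt D X}
    (h : EqvGen (D.Step X) z z') : Join (ReflTransGen (D.Step X)) z z' := by
  have hequiv := equivalence_join_reflTransGen (r := D.Step X) fun _ b _ hab hac =>
    ⟨b, ReflGen.refl, Step.eq_of_step hnb hab hac ▸ ReflTransGen.refl⟩
  exact hequiv.eqvGen_iff.1 (EqvGen.eqvGen_mono (fun _ b hab => ⟨b, .single hab, .refl⟩) _ _ h)

theorem eq_of_reflTransGen_of_fst_eq (hnc : ¬ I.HasDirectedCycle) {z z' : Elt D X}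
    (h : ReflTransGen (D.Step X) z z') (hfst : z.1 = z'.1) : z = z' := by
  rcases reflTransGen_iff_eq_or_transGen.1 h with h | h
  · exact h.symm
  · have hadj : TransGen I.Adj z.1 z'.1 := TransGen.lift Sigma.fst (fun _ _ => Step.adj) _ _ h
    exact absurd (hfst ▸ hadj) (I.not_transGen_adj_self hnc _)

end GDiagram

namespace CartObj

variable {D : GDiagram I (B ⥤ Type u)} (A : CartObj D) {X : B}

def proj (z : Elt A.diag X) : Elt D X :=
  ⟨z.1, (A.hom.app z.1).app X z.2⟩

theorem hom_app_map_apply (e : I.E) (y : (A.diag.obj (I.s e)).obj X) :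
    (A.hom.app (I.t e)).app X ((A.diag.map e).app X y) =
      (D.map e).app X ((A.hom.app (I.s e)).app X y) :=
  types_congr_hom (congr_app (A.hom.naturality e) X) y

theorem step_proj {z z' : Elt A.diag X} (h : A.diag.Step X z z') :
    D.Step X (A.proj z) (A.proj z') := by
  obtain ⟨e, y, rfl, rfl⟩ := h
  exact ⟨e, _, rfl, congrArg (Sigma.mk _) (A.hom_app_map_apply e y)⟩

theorem exists_reflTransGen_of_proj {z : Elt A.diag X} {w : Elt D X}
    (h : ReflTransGen (D.Step X) (A.proj z) w) :
    ∃ w', A.proj w' = w ∧ ReflTransGen (A.diag.Step X) z w' := by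
  induction h with
  | refl => exact ⟨z, rfl, .refl⟩
  | tail _ hstep ih =>
    obtain ⟨⟨i, x⟩, hx, hzx⟩ := ih
    obtain ⟨e, y, rfl, rfl⟩ := hstep
    obtain ⟨rfl, hxy⟩ := Sigma.mk.inj_iff.1 hx
    refine ⟨⟨I.t e, (A.diag.map e).app X x⟩, ?_, hzx.tail ⟨e, x, rfl, rfl⟩⟩
    exact congrArg (Sigma.mk _) ((A.hom_app_map_apply e x).trans (by rw [eq_of_heq hxy]))

theorem exists_reflTransGen_to_proj {z w : Elt D X} (h : ReflTransGen (D.Step X) z w)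
    {w' : Elt A.diag X} (hw : A.proj w' = w) :
    ∃ y : (A.diag.obj z.1).obj X,
      (A.hom.app z.1).app X y = z.2 ∧ ReflTransGen (A.diag.Step X) ⟨z.1, y⟩ w' := by
  induction h using ReflTransGen.head_induction_on with
  | refl => subst hw; exact ⟨w'.2, rfl, .refl⟩
  | head hstep _ ih =>
    obtain ⟨e, y₀, rfl, rfl⟩ := hstep
    obtain ⟨y₁, hy₁, hrtg⟩ := ih
    obtain ⟨x, hx, hx'⟩ := Types.exists_of_isPullback ((A.cart e).app X) y₁ y₀ hy₁
    exact ⟨x, hx', .head ⟨e, x, rfl, by rw [hx]⟩ hrtg⟩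

theorem eq_of_step_of_step (hnb : ∀ i : I.V, ¬ I.Branching i) {a a' b : Elt A.diag X}
    (h : A.diag.Step X a b) (h' : A.diag.Step X a' b) (hproj : A.proj a = A.proj a') :
    a = a' := by
  obtain ⟨e, y, rfl, rfl⟩ := h
  obtain ⟨e', y', rfl, hb⟩ := h'
  obtain rfl : e = e' := I.eq_of_s_eq hnb (congrArg Sigma.fst hproj)
  have hτ := eq_of_heq (Sigma.mk.inj_iff.1 hproj).2
  have hmap := eq_of_heq (Sigma.mk.inj_iff.1 hb).2
  rw [Types.ext_of_isPullback ((A.cart e).app X) hmap hτ]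

/-- The edges along the two paths are forced by the absence of branching, the paths have the same
length by acyclicity, and cartesianness cancels them one step at a time. -/
theorem eq_of_reflTransGen (hnb : ∀ i : I.V, ¬ I.Branching i) (hnc : ¬ I.HasDirectedCycle)
    {a a' w : Elt A.diag X} (h : ReflTransGen (A.diag.Step X) a w)
    (h' : ReflTransGen (A.diag.Step X) a' w) (hproj : A.proj a = A.proj a') : a = a' := by
  have hfst : a.1 = a'.1 := (congrArg Sigma.fst hproj :)
  induction h using ReflTransGen.head_induction_on generalizing a' with
  | refl => exact (GDiagram.eq_of_reflTransGen_of_fst_eq hnc h' hfst.symm).symm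
  | head hab hbw ih =>
    rcases h'.cases_head with rfl | ⟨b', hab', hb'w⟩
    · exact GDiagram.eq_of_reflTransGen_of_fst_eq hnc (.head hab hbw) hfst
    · have hb : A.proj _ = A.proj b' :=
        GDiagram.Step.eq_of_step hnb (A.step_proj hab) (hproj ▸ A.step_proj hab')
      obtain rfl := ih hb'w hb (congrArg Sigma.fst hb :)
      exact A.eq_of_step_of_step hnb hab hab' hproj

end CartObj

end NoBranching

section EssSurj

variable {B : Type u} [SmallCategory B] {I : MGraph.{u}} {D : GDiagram I (B ⥤ Type u)}

namespace CartObj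

variable (A : CartObj D) (c : GCocone D)

def cocone : GCocone A.diag where
  pt := c.pt
  leg i := A.hom.app i ≫ c.leg i
  comm e := by rw [← Category.assoc, A.hom.naturality, Category.assoc, c.comm]

/-- The candidate for `σ` with `κ*(σ) ≅ A`: the colimit of `A` over the apex of `c`. -/
abbrev colimitOver : Over c.pt :=
  Over.mk (A.cocone c).desc

noncomputable def toPullbackObjApp (i : I.V) :
    A.diag.obj i ⟶ pullback (A.colimitOver c).hom (c.leg i) :=
  pullback.lift (A.diag.colimitLeg i) (A.hom.app i) ((A.cocone c).colimitLeg_desc i)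

@[simp]
theorem toPullbackObjApp_fst (i : I.V) :
    A.toPullbackObjApp c i ≫ pullback.fst _ _ = A.diag.colimitLeg i :=
  pullback.lift_fst _ _ _

@[simp]
theorem toPullbackObjApp_snd (i : I.V) :
    A.toPullbackObjApp c i ≫ pullback.snd _ _ = A.hom.app i :=
  pullback.lift_snd _ _ _

noncomputable def toPullbackObj : A ⟶ c.pullbackObj (A.colimitOver c) :=
  ⟨⟨A.toPullbackObjApp c, fun e => by
    show A.diag.map e ≫ A.toPullbackObjApp c (I.t e) =
      A.toPullbackObjApp c (I.s e) ≫ c.pullbackDiagMap _ e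
    apply pullback.hom_ext
    · simp [A.diag.colimitLeg_comm]
    · simp [A.hom.naturality, reassoc_of% A.toPullbackObjApp_snd c (I.s e)]⟩,
   fun i => pullback.lift_snd _ _ _⟩

theorem toPullbackObj_app_fst (i : I.V) {X : B} (x : (A.diag.obj i).obj X) :
    (pullback.fst (A.colimitOver c).hom (c.leg i)).app X (((A.toPullbackObj c).1.app i).app X x) =
      Quot.mk (A.diag.Step X) ⟨i, x⟩ :=
  types_congr_hom (congr_app (A.toPullbackObjApp_fst c i) X) x

theorem toPullbackObj_app_snd (i : I.V) {X : B} (x : (A.diag.obj i).obj X) :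
    (pullback.snd (A.colimitOver c).hom (c.leg i)).app X (((A.toPullbackObj c).1.app i).app X x) =
      (A.hom.app i).app X x :=
  types_congr_hom (congr_app (A.toPullbackObjApp_snd c i) X) x

variable {c}

theorem bijective_toPullbackObj_app (hnb : ∀ i : I.V, ¬ I.Branching i)
    (hnc : ¬ I.HasDirectedCycle) (hc : c.IsColimit) (i : I.V) (X : B) :
    Function.Bijective (((A.toPullbackObj c).1.app i).app X) := by
  constructor
  · intro x x' h
    have hq := (A.toPullbackObj_app_fst c i x).symm.trans
      ((congrArg _ h).trans (A.toPullbackObj_app_fst c i x'))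
    have hτ := (A.toPullbackObj_app_snd c i x).symm.trans
      ((congrArg _ h).trans (A.toPullbackObj_app_snd c i x'))
    obtain ⟨w, hw, hw'⟩ := GDiagram.join_of_eqvGen hnb (Quot.eqvGen_exact hq)
    exact eq_of_heq (Sigma.mk.inj_iff.1
      (A.eq_of_reflTransGen hnb hnc hw hw' (congrArg (Sigma.mk i) hτ))).2
  · intro p
    obtain ⟨z, hz⟩ := Quot.exists_rep ((pullback.fst (A.colimitOver c).hom (c.leg i)).app X p)
    have hleg : (c.leg (A.proj z).1).app X (A.proj z).2 =
        (c.leg i).app X ((pullback.snd (A.colimitOver c).hom (c.leg i)).app X p) := by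
      rw [← pullback_condition_app, ← hz]
      rfl
    obtain ⟨w, hzw, hpw⟩ := GDiagram.join_of_eqvGen hnb (hc.eqvGen_of_leg_app_eq (z' := ⟨i, _⟩) hleg)
    obtain ⟨w', rfl, hzw'⟩ := A.exists_reflTransGen_of_proj hzw
    obtain ⟨y, hy, hyw'⟩ := A.exists_reflTransGen_to_proj hpw rfl
    refine ⟨y, pullback_ext_app ?_ ?_⟩
    · rw [toPullbackObj_app_fst, ← hz]
      exact Quot.eqvGen_sound <| .trans _ _ _ (EqvGen.reflTransGen_le_eqvGen _ _ _ hyw')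
        (.symm _ _ (EqvGen.reflTransGen_le_eqvGen _ _ _ hzw'))
    · rw [toPullbackObj_app_snd, hy]

end CartObj

theorem GCocone.pullbackFunctor_essSurj (hnb : ∀ i : I.V, ¬ I.Branching i)
    (hnc : ¬ I.HasDirectedCycle) {c : GCocone D} (hc : c.IsColimit) :
    c.pullbackFunctor.EssSurj where
  mem_essImage A := by
    have (i : I.V) : IsIso ((A.toPullbackObj c).1.app i) :=
      have := fun X => (isIso_iff_bijective _).2 (A.bijective_toPullbackObj_app hnb hnc hc i X)
      NatIso.isIso_of_isIso_app _
    have := CartObj.isIso_of_isIso_app (A.toPullbackObj c)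
    exact ⟨A.colimitOver c, ⟨(asIso (A.toPullbackObj c)).symm⟩⟩

end EssSurj

theorem no_branching_vanKampen_general
    {B : Type u} [SmallCategory B] {I : MGraph.{u}}
    (hnc : ¬ I.HasDirectedCycle)
    (hnb : ∀ i : I.V, ¬ I.Branching i)
    (D : GDiagram I (B ⥤ Type u)) (c : GCocone D) (hc : c.IsColimit) :
    c.IsVanKampen := by
  have hpb (σ : Over c.pt) := hc.isColimit_pullbackCocone σ
  have : c.pullbackFunctor.IsEquivalence :=
    { faithful := GCocone.pullbackFunctor_faithful hpb
      full := GCocone.pullbackFunctor_full hpb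
      essSurj := GCocone.pullbackFunctor_essSurj hnb hnc hc }
  exact ⟨c.pullbackFunctor, fun σ i => pullback.fst σ.hom (c.leg i),
    fun σ i => IsPullback.of_hasPullback _ _, fun γ i => c.pullbackMapApp_fst γ i, this⟩

/-- **Diagrams without branching are Van Kampen** (Sect. 6.4).  If the finite shape
graph `I` has no directed cycles and no branching vertices, then for every diagram
`D : I → Set^B` the colimiting cocone is a Van Kampen cocone. -/
theorem no_branching_vanKampen
    {B : Type u} [SmallCategory B] {I : MGraph.{u}} [Finite I.V] [Finite I.E]
    (hnc : ¬ I.HasDirectedCycle)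
    (hnb : ∀ i : I.V, ¬ I.Branching i)
    (D : GDiagram I (B ⥤ Type u)) (c : GCocone D) (hc : c.IsColimit) :
    c.IsVanKampen :=
  no_branching_vanKampen_general hnc hnb D c hc
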